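/- arXiv:2105.00711 — 3 statements merged into one kernel-verified Lean document; each statement's English description precedes it below -/
import Mathlib

section
/- Let X and Z be disjoint finite sets and let y be a point not contained in X ∪ Z. The number of partial order relations on X ∪ Z in which Z is an antichain (i.e., no two distinct elements of Z are comparable) equals the number of partial order relations R on X ∪ Z ∪ {y} in which the points of Z ∪ {y} are exactly the maximal points of R. -/
/-! Let `U` be the up-set of `Z` in `R` and `L = X \ U`, a lower end. Reversing `R` on `L` and
on `U` while replacing the relation from `L` to `U` by its complement (the map `τ_{L,U}`) is an
involution on the p.o.r.'s having `L` as a lower end. It turns `Z`, the set of minimal points of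
`U`, into the set of maximal points of `U`; a new point `y` put above `L` then makes `Z ∪ {y}`
exactly the maximal points. Conversely `L` is recovered as the set of points below `y`: by
finiteness every other point of `X` lies below a maximal point, which must be in `Z`. -/

namespace Erne

variable {α : Type*}

/-- A partial order relation with carrier `X`: a reflexive, antisymmetric,
transitive subset of `X × X`. -/
def IsPor (X : Set α) (R : Set (α × α)) : Prop :=
  R ⊆ X ×ˢ X ∧ (∀ x ∈ X, (x, x) ∈ R) ∧
    (∀ x y, (x, y) ∈ R → (y, x) ∈ R → x = y) ∧
    (∀ x y z, (x, y) ∈ R → (y, z) ∈ R → (x, z) ∈ R)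

/-- The carrier of a p.o.r. (recovered from reflexivity). -/
def carrier (R : Set (α × α)) : Set α := {x | (x, x) ∈ R}

/-- The induced p.o.r. `R|_M = R ∩ (M × M)`. -/
def restrict (R : Set (α × α)) (M : Set α) : Set (α × α) := R ∩ M ×ˢ M

/-- The dual `R^d`. -/
def dual (R : Set (α × α)) : Set (α × α) := {p | (p.2, p.1) ∈ R}

/-- `↑_R M`. -/
def upSet (R : Set (α × α)) (M : Set α) : Set α := {x | ∃ y ∈ M, (y, x) ∈ R}

/-- `↓_R M`. -/
def downSet (R : Set (α × α)) (M : Set α) : Set α := {x | ∃ y ∈ M, (x, y) ∈ R}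

/-- `↑_R x`. -/
def up (R : Set (α × α)) (x : α) : Set α := {z | (x, z) ∈ R}

/-- `↓_R y`. -/
def down (R : Set (α × α)) (y : α) : Set α := {x | (x, y) ∈ R}

/-- `L` is a lower end of `R`. -/
def IsLowerEnd (R : Set (α × α)) (L : Set α) : Prop :=
  ∀ x y, (x, y) ∈ R → y ∈ L → x ∈ L

/-- `U` is an upper end of `R`. -/
def IsUpperEnd (R : Set (α × α)) (U : Set α) : Prop :=
  ∀ x y, (x, y) ∈ R → x ∈ U → y ∈ U

/-- `M` is convex in `R`. -/
def IsConvex (R : Set (α × α)) (M : Set α) : Prop :=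
  ∀ a b x, a ∈ M → b ∈ M → (a, x) ∈ R → (x, b) ∈ R → x ∈ M

/-- The set of maximal points of `R`: those `x` with `↑_R x = {x}`. -/
def maxPts (R : Set (α × α)) : Set α := {x | up R x = {x}}

/-- `max M = max R|_M`. -/
def maxOf (R : Set (α × α)) (M : Set α) : Set α := maxPts (restrict R M)

/-- `γ_R(M) = ⋃_{(m,n) ∈ M×M} (↑_R m) ∩ (↓_R n)`, the convex hull of `M` in `R`. -/
def gamma (R : Set (α × α)) (M : Set α) : Set α :=
  {x | ∃ m ∈ M, ∃ n ∈ M, (m, x) ∈ R ∧ (x, n) ∈ R}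

/-- The antichain (diagonal) `Δ_Y` on `Y`. -/
def diag (Y : Set α) : Set (α × α) := {p | p.1 = p.2 ∧ p.1 ∈ Y}

/-- `𝔘(X,Y)`: p.o.r.'s on `X ∪ Y` in which `Y` is an upper end. -/
def Uset (X Y : Set α) : Set (Set (α × α)) :=
  {R | IsPor (X ∪ Y) R ∧ IsUpperEnd R Y}

/-- `ℭ_Q(X,Y)`: p.o.r.'s on `X ∪ Y` with `R|_Y = Q` convex in `R`. -/
def Cset (Q : Set (α × α)) (X Y : Set α) : Set (Set (α × α)) :=
  {R | IsPor (X ∪ Y) R ∧ restrict R Y = Q ∧ IsConvex R Y}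

/-- `𝔐_Q(X,Y) = 𝔘(X,Y) ∩ ℭ_Q(X,Y)`. -/
def Mset (Q : Set (α × α)) (X Y : Set α) : Set (Set (α × α)) :=
  Uset X Y ∩ Cset Q X Y

/-- `𝔐*_Q(X,Y)`: members of `ℭ_Q(X,Y)` with `max Q = max R`. -/
def MstarSet (Q : Set (α × α)) (X Y : Set α) : Set (Set (α × α)) :=
  {R ∈ Cset Q X Y | maxPts Q = maxPts R}

/-- `ℑ_Q(X,Y)`: p.o.r.'s on `X ∪ Y` with `R|_Y = Q`. -/
def Iset (Q : Set (α × α)) (X Y : Set α) : Set (Set (α × α)) :=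
  {R | IsPor (X ∪ Y) R ∧ restrict R Y = Q}

/-- `𝔑*_Q(X,Y)`: members of `ℑ_Q(X,Y)` with `max Q = max R`. -/
def NstarSet (Q : Set (α × α)) (X Y : Set α) : Set (Set (α × α)) :=
  {R ∈ Iset Q X Y | maxPts Q = maxPts R}

/-- `τ_{X,Y}(R) = (R|_X)^d ∪ ((X×Y) \ R) ∪ (R|_Y)^d`. -/
def tau (X Y : Set α) (R : Set (α × α)) : Set (α × α) :=
  dual (restrict R X) ∪ ((X ×ˢ Y) \ R) ∪ dual (restrict R Y)

/-- `𝒢_Q(M)`: members `G` of `ℑ_Q(M,Y)` with `γ_G(Y) = c(G)`. -/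
def GsetM (Q : Set (α × α)) (Y M : Set α) : Set (Set (α × α)) :=
  {G ∈ Iset Q M Y | gamma G Y = carrier G}

/-- `𝔊_Q(X) = ⋃_{M ⊆ X} 𝒢_Q(M)`. -/
def Gset (Q : Set (α × α)) (X Y : Set α) : Set (Set (α × α)) :=
  {G | ∃ M ⊆ X, G ∈ GsetM Q Y M}

/-- `ℒ(P)`: the lower ends of `P` (subsets of the carrier of `P`). -/
def lowerEnds (P : Set (α × α)) : Set (Set α) :=
  {L | L ⊆ carrier P ∧ IsLowerEnd P L}

/-- `ℋ_Q(Y, ℒ(P))`: mappings `f : Y → ℒ(P)` with `(a,b) ∈ Q → f a ⊆ f b`. -/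
def Hset (Q P : Set (α × α)) (Y : Set α) : Set (↥Y → Set α) :=
  {f | (∀ y, f y ∈ lowerEnds P) ∧
    ∀ a b : ↥Y, ((a : α), (b : α)) ∈ Q → f a ⊆ f b}

/-- `Φ(f) = P ∪ Q ∪ ⋃_{y ∈ Y} (f(y) × {y})` for `f ∈ ℋ_Q(Y, ℒ(P))`. -/
def Phi (Q : Set (α × α)) (Y : Set α) (P : Set (α × α)) (f : ↥Y → Set α) :
    Set (α × α) :=
  P ∪ Q ∪ {p | ∃ h : p.2 ∈ Y, p.1 ∈ f ⟨p.2, h⟩}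

/-- `𝔉_Q(X,Y)`: pairs `(P, f)` with `P ∈ 𝔓(X)` and `f ∈ ℋ_Q(Y, ℒ(P))`;
the first component encodes `S(f) = P`. -/
def Fset (Q : Set (α × α)) (X Y : Set α) :
    Set (Set (α × α) × (↥Y → Set α)) :=
  {pf | IsPor X pf.1 ∧ pf.2 ∈ Hset Q pf.1 Y}

/-- `𝔉*_Q(X,Y)`: those `f ∈ 𝔉_Q(X,Y)` with `X = ⋃_{y ∈ Y} f(y)`. -/
def FstarSet (Q : Set (α × α)) (X Y : Set α) :
    Set (Set (α × α) × (↥Y → Set α)) :=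
  {pf ∈ Fset Q X Y | X = ⋃ y : ↥Y, pf.2 y}

/-- The transitive hull of `S`: the smallest transitive relation containing `S`. -/
def transHull (S : Set (α × α)) : Set (α × α) :=
  {p | Relation.TransGen (fun a b => (a, b) ∈ S) p.1 p.2}

lemma mem_maxPts_iff {S : Set (α × α)} {x : α} :
    x ∈ maxPts S ↔ (x, x) ∈ S ∧ ∀ b, (x, b) ∈ S → b = x :=
  Set.eq_singleton_iff_unique_mem

lemma restrict_eq_diag_of_subset_maxPts {S : Set (α × α)} {Z : Set α}
    (hZ : Z ⊆ maxPts S) : restrict S Z = diag Z := by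
  ext ⟨a, b⟩
  constructor
  · rintro ⟨hab, ha, -⟩
    exact ⟨((mem_maxPts_iff.mp (hZ ha)).2 b hab).symm, ha⟩
  · rintro ⟨hab, ha⟩
    obtain rfl : a = b := hab
    exact ⟨(mem_maxPts_iff.mp (hZ ha)).1, ha, ha⟩

lemma dual_diag (Z : Set α) : dual (diag Z) = diag Z := by
  ext ⟨a, b⟩
  simp only [dual, diag, Set.mem_ofPred_eq]
  constructor <;> rintro ⟨rfl, h⟩ <;> exact ⟨rfl, h⟩

lemma restrict_restrict_of_subset {S : Set (α × α)} {V Z : Set α} (hZV : Z ⊆ V) :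
    restrict (restrict S V) Z = restrict S Z := by
  ext ⟨a, b⟩
  simp only [restrict, Set.mem_inter_iff, Set.mem_prod]
  constructor
  · rintro ⟨⟨h, -⟩, hZ⟩
    exact ⟨h, hZ⟩
  · rintro ⟨h, ha, hb⟩
    exact ⟨⟨h, hZV ha, hZV hb⟩, ha, hb⟩

lemma IsPor.restrict {W V : Set α} {S : Set (α × α)} (hS : IsPor W S) (hVW : V ⊆ W) :
    IsPor V (restrict S V) :=
  ⟨Set.inter_subset_right, fun x hx => ⟨hS.2.1 x (hVW hx), hx, hx⟩,
    fun x y hxy hyx => hS.2.2.1 x y hxy.1 hyx.1,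
    fun x y z hxy hyz => ⟨hS.2.2.2 x y z hxy.1 hyz.1, hxy.2.1, hyz.2.2⟩⟩

lemma exists_mem_maxPts_of_mem {V : Set α} {S : Set (α × α)} (hV : V.Finite)
    (hS : IsPor V S) {x : α} (hx : x ∈ V) : ∃ m ∈ maxPts S, (x, m) ∈ S := by
  have hfin : ∀ a, (up S a).Finite := fun a => hV.subset fun b hb => (hS.1 hb).2
  -- a point above `x` whose up-set is smallest is maximal
  obtain ⟨m, hxm, hmin⟩ := Set.exists_min_image (up S x) (fun a => (up S a).ncard) (hfin x)
    ⟨x, hS.2.1 x hx⟩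
  refine ⟨m, mem_maxPts_iff.mpr ⟨hS.2.1 m (hS.1 hxm).2, fun b hmb => ?_⟩, hxm⟩
  by_contra hbm
  have hlt : up S b ⊂ up S m :=
    (Set.ssubset_iff_of_subset fun c hbc => hS.2.2.2 m b c hmb hbc).mpr
      ⟨m, hS.2.1 m (hS.1 hxm).2, fun hbm' => hbm (hS.2.2.1 b m hbm' hmb)⟩
  exact (Set.ncard_lt_ncard hlt (hfin m)).not_ge (hmin b (hS.2.2.2 x m b hxm hmb))

section Tau

variable {V L : Set α} {R : Set (α × α)} {a b : α}

lemma mem_tau_iff {X Y : Set α} :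
    (a, b) ∈ tau X Y R ↔ (a ∈ X ∧ b ∈ X ∧ (b, a) ∈ R) ∨ (a ∈ X ∧ b ∈ Y ∧ (a, b) ∉ R) ∨
      (a ∈ Y ∧ b ∈ Y ∧ (b, a) ∈ R) := by
  simp only [tau, dual, restrict, Set.mem_union, Set.mem_sdiff, Set.mem_inter_iff,
    Set.mem_prod, Set.mem_ofPred_eq]
  tauto

lemma IsPor.tau (hR : IsPor V R) (hL : L ⊆ V) : IsPor V (tau L (V \ L) R) := by
  obtain ⟨hsub, hrefl, hanti, htrans⟩ := hR
  refine ⟨fun ⟨a, b⟩ h => ?_, fun x hx => ?_, fun a b hab hba => ?_, fun a b c hab hbc => ?_⟩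
  · rcases mem_tau_iff.mp h with ⟨ha, hb, -⟩ | ⟨ha, hb, -⟩ | ⟨ha, hb, -⟩
    exacts [⟨hL ha, hL hb⟩, ⟨hL ha, hb.1⟩, ⟨ha.1, hb.1⟩]
  · by_cases hxL : x ∈ L
    · exact mem_tau_iff.mpr (Or.inl ⟨hxL, hxL, hrefl x hx⟩)
    · exact mem_tau_iff.mpr (Or.inr (Or.inr ⟨⟨hx, hxL⟩, ⟨hx, hxL⟩, hrefl x hx⟩))
  · rcases mem_tau_iff.mp hab with ⟨ha, hb, h⟩ | ⟨ha, hb, -⟩ | ⟨ha, hb, h⟩ <;>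
      rcases mem_tau_iff.mp hba with ⟨hb', ha', h'⟩ | ⟨hb', ha', -⟩ | ⟨hb', ha', h'⟩
    all_goals first
      | exact hanti a b h' h
      | exact absurd ha ha'.2
      | exact absurd hb hb'.2
      | exact absurd ha' ha.2
      | exact absurd hb' hb.2
  · rcases mem_tau_iff.mp hab with ⟨ha, hb, h⟩ | ⟨ha, hb, h⟩ | ⟨ha, hb, h⟩ <;>
      rcases mem_tau_iff.mp hbc with ⟨hb', hc, h'⟩ | ⟨hb', hc, h'⟩ | ⟨hb', hc, h'⟩
    · exact mem_tau_iff.mpr (Or.inl ⟨ha, hc, htrans c b a h' h⟩)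
    · exact mem_tau_iff.mpr (Or.inr (Or.inl ⟨ha, hc, fun hac => h' (htrans b a c h hac)⟩))
    · exact absurd hb hb'.2
    · exact absurd hb' hb.2
    · exact absurd hb' hb.2
    · exact mem_tau_iff.mpr (Or.inr (Or.inl ⟨ha, hc, fun hac => h (htrans a c b hac h')⟩))
    · exact absurd hb' hb.2
    · exact absurd hb' hb.2
    · exact mem_tau_iff.mpr (Or.inr (Or.inr ⟨ha, hc, htrans c b a h' h⟩))

lemma isLowerEnd_tau : IsLowerEnd (tau L (V \ L) R) L := by
  intro a b h hb
  rcases mem_tau_iff.mp h with ⟨ha, -, -⟩ | ⟨-, hb', -⟩ | ⟨-, hb', -⟩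
  exacts [ha, absurd hb hb'.2, absurd hb hb'.2]

lemma tau_tau (hR : R ⊆ V ×ˢ V) (hL : IsLowerEnd R L) :
    tau L (V \ L) (tau L (V \ L) R) = R := by
  ext ⟨a, b⟩
  constructor
  · intro h
    rcases mem_tau_iff.mp h with ⟨ha, hb, h⟩ | ⟨ha, hb, h⟩ | ⟨ha, hb, h⟩
    · rcases mem_tau_iff.mp h with ⟨-, -, h⟩ | ⟨-, ha', -⟩ | ⟨hb', -, -⟩
      exacts [h, absurd ha ha'.2, absurd hb hb'.2]
    · by_contra hab
      exact h (mem_tau_iff.mpr (Or.inr (Or.inl ⟨ha, hb, hab⟩)))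
    · rcases mem_tau_iff.mp h with ⟨hb', -, -⟩ | ⟨hb', -, -⟩ | ⟨-, -, h⟩
      exacts [absurd hb' hb.2, absurd hb' hb.2, h]
  · intro h
    obtain ⟨ha, hb⟩ := hR h
    by_cases hbL : b ∈ L
    · exact mem_tau_iff.mpr (Or.inl ⟨hL a b h hbL, hbL,
        mem_tau_iff.mpr (Or.inl ⟨hbL, hL a b h hbL, h⟩)⟩)
    by_cases haL : a ∈ L
    · refine mem_tau_iff.mpr (Or.inr (Or.inl ⟨haL, ⟨hb, hbL⟩, fun h' => ?_⟩))
      rcases mem_tau_iff.mp h' with ⟨-, hb', -⟩ | ⟨-, -, h'⟩ | ⟨ha', -, -⟩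
      exacts [hbL hb', h' h, ha'.2 haL]
    · exact mem_tau_iff.mpr (Or.inr (Or.inr ⟨⟨ha, haL⟩, ⟨hb, hbL⟩,
        mem_tau_iff.mpr (Or.inr (Or.inr ⟨⟨hb, hbL⟩, ⟨ha, haL⟩, h⟩))⟩))

lemma up_tau_of_mem_diff (ha : a ∈ V \ L) : up (tau L (V \ L) R) a = down R a ∩ (V \ L) := by
  ext b
  simp only [up, down, Set.mem_ofPred_eq, Set.mem_inter_iff, mem_tau_iff]
  constructor
  · rintro (⟨ha', -, -⟩ | ⟨ha', -, -⟩ | ⟨-, hb, h⟩)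
    exacts [absurd ha' ha.2, absurd ha' ha.2, ⟨h, hb⟩]
  · rintro ⟨h, hb⟩
    exact Or.inr (Or.inr ⟨ha, hb, h⟩)

lemma restrict_tau_of_subset_diff {M : Set α} (hM : M ⊆ V \ L) :
    restrict (tau L (V \ L) R) M = dual (restrict R M) := by
  ext ⟨a, b⟩
  simp only [restrict, dual, Set.mem_inter_iff, Set.mem_prod, Set.mem_ofPred_eq]
  constructor
  · rintro ⟨h, ha, hb⟩
    rcases mem_tau_iff.mp h with ⟨ha', -, -⟩ | ⟨ha', -, -⟩ | ⟨-, -, h⟩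
    exacts [absurd ha' (hM ha).2, absurd ha' (hM ha).2, ⟨h, hb, ha⟩]
  · rintro ⟨h, hb, ha⟩
    exact ⟨mem_tau_iff.mpr (Or.inr (Or.inr ⟨hM ha, hM hb, h⟩)), ha, hb⟩

end Tau

def adjoinTop (R : Set (α × α)) (L : Set α) (y : α) : Set (α × α) :=
  R ∪ insert y L ×ˢ {y}

section AdjoinTop

variable {V L : Set α} {R S : Set (α × α)} {y : α}

lemma mem_adjoinTop_iff {a b : α} :
    (a, b) ∈ adjoinTop R L y ↔ (a, b) ∈ R ∨ ((a = y ∨ a ∈ L) ∧ b = y) := by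
  simp [adjoinTop]

lemma IsPor.adjoinTop (hR : IsPor V R) (hL : IsLowerEnd R L) (hLV : L ⊆ V) (hy : y ∉ V) :
    IsPor (V ∪ {y}) (adjoinTop R L y) := by
  obtain ⟨hsub, hrefl, hanti, htrans⟩ := hR
  refine ⟨fun ⟨a, b⟩ h => ?_, fun x hx => ?_, fun a b hab hba => ?_, fun a b c hab hbc => ?_⟩
  · rcases mem_adjoinTop_iff.mp h with h | ⟨ha | ha, rfl⟩
    · exact ⟨Or.inl (hsub h).1, Or.inl (hsub h).2⟩
    · exact ⟨Or.inr ha, Or.inr rfl⟩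
    · exact ⟨Or.inl (hLV ha), Or.inr rfl⟩
  · rcases hx with hx | rfl
    · exact mem_adjoinTop_iff.mpr (Or.inl (hrefl x hx))
    · exact mem_adjoinTop_iff.mpr (Or.inr ⟨Or.inl rfl, rfl⟩)
  · rcases mem_adjoinTop_iff.mp hab with hab' | ⟨-, rfl⟩ <;>
      rcases mem_adjoinTop_iff.mp hba with hba' | ⟨-, hay⟩
    · exact hanti a b hab' hba'
    · exact (hy (hay ▸ (hsub hab').1)).elim
    · exact (hy (hsub hba').1).elim
    · exact hay
  · rcases mem_adjoinTop_iff.mp hbc with hbc' | ⟨hb, rfl⟩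
    · rcases mem_adjoinTop_iff.mp hab with hab' | ⟨-, rfl⟩
      · exact mem_adjoinTop_iff.mpr (Or.inl (htrans a b c hab' hbc'))
      · exact (hy (hsub hbc').1).elim
    · rcases mem_adjoinTop_iff.mp hab with hab' | ⟨ha, rfl⟩
      · have hbL : b ∈ L := hb.resolve_left fun hby => hy (hby ▸ (hsub hab').2)
        exact mem_adjoinTop_iff.mpr (Or.inr ⟨Or.inr (hL a b hab' hbL), rfl⟩)
      · exact mem_adjoinTop_iff.mpr (Or.inr ⟨ha, rfl⟩)

lemma restrict_adjoinTop (hR : R ⊆ V ×ˢ V) (hy : y ∉ V) : restrict (adjoinTop R L y) V = R := by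
  ext ⟨a, b⟩
  simp only [restrict, Set.mem_inter_iff, Set.mem_prod, mem_adjoinTop_iff]
  constructor
  · rintro ⟨h | ⟨-, rfl⟩, -, hb⟩
    exacts [h, absurd hb hy]
  · intro h
    exact ⟨Or.inl h, hR h⟩

lemma down_adjoinTop (hR : R ⊆ V ×ˢ V) (hy : y ∉ V) : down (adjoinTop R L y) y = insert y L := by
  ext a
  simp only [down, Set.mem_ofPred_eq, mem_adjoinTop_iff, Set.mem_insert_iff, and_true]
  exact or_iff_right fun h => hy (hR h).2

lemma maxPts_adjoinTop (hR : R ⊆ V ×ˢ V) (hy : y ∉ V) :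
    maxPts (adjoinTop R L y) = maxPts R \ L ∪ {y} := by
  ext x
  simp only [Set.mem_union, Set.mem_sdiff, Set.mem_singleton_iff, mem_maxPts_iff,
    mem_adjoinTop_iff]
  constructor
  · rintro ⟨hx, hmax⟩
    by_cases hxy : x = y
    · exact Or.inr hxy
    refine Or.inl ⟨⟨hx.resolve_right (by tauto), fun b hb => hmax b (Or.inl hb)⟩, fun hxL => ?_⟩
    exact hxy (hmax y (Or.inr ⟨Or.inr hxL, rfl⟩)).symm
  · rintro (⟨⟨hx, hmax⟩, hxL⟩ | rfl)
    · refine ⟨Or.inl hx, fun b => ?_⟩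
      rintro (hb | ⟨rfl | hxL', rfl⟩)
      exacts [hmax b hb, absurd (hR hx).1 hy, absurd hxL' hxL]
    · refine ⟨Or.inr ⟨Or.inl rfl, rfl⟩, fun b => ?_⟩
      rintro (hb | ⟨-, rfl⟩)
      exacts [absurd (hR hb).1 hy, rfl]

lemma adjoinTop_restrict_down (hS : S ⊆ (V ∪ {y}) ×ˢ (V ∪ {y})) (hy : y ∈ maxPts S) :
    adjoinTop (restrict S V) (down S y \ {y}) y = S := by
  obtain ⟨hyy, hymax⟩ := mem_maxPts_iff.mp hy
  ext ⟨a, b⟩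
  simp only [mem_adjoinTop_iff, restrict, Set.mem_inter_iff, Set.mem_prod, down,
    Set.mem_sdiff, Set.mem_ofPred_eq, Set.mem_singleton_iff]
  constructor
  · rintro (⟨h, -⟩ | ⟨rfl | ⟨h, -⟩, rfl⟩)
    exacts [h, hyy, h]
  · intro h
    by_cases hb : b = y
    · subst hb
      by_cases ha : a = b
      · exact Or.inr ⟨Or.inl ha, rfl⟩
      · exact Or.inr ⟨Or.inr ⟨h, ha⟩, rfl⟩
    have ha : a ≠ y := fun ha => hb (hymax b (ha ▸ h))
    obtain ⟨ha' | ha', hb' | hb'⟩ := hS h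
    exacts [Or.inl ⟨h, ha', hb'⟩, absurd hb' hb, absurd ha' ha, absurd ha' ha]

lemma isLowerEnd_restrict_down_diff (hS : IsPor (V ∪ {y}) S) (hy : y ∉ V) :
    IsLowerEnd (restrict S V) (down S y \ {y}) := by
  rintro a b ⟨hab, ha, -⟩ ⟨hby, -⟩
  exact ⟨hS.2.2.2 a b y hab hby, fun hay => hy (hay ▸ ha)⟩

lemma notMem_down_diff_of_mem_maxPts {a : α} (ha : a ∈ maxPts S) : a ∉ down S y \ {y} :=
  fun ⟨hay, hne⟩ => hne ((mem_maxPts_iff.mp ha).2 y hay).symm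

lemma down_diff_subset (hS : S ⊆ (V ∪ {y}) ×ˢ (V ∪ {y})) : down S y \ {y} ⊆ V := by
  rintro a ⟨hay, hne⟩
  exact (hS hay).1.resolve_right hne

end AdjoinTop

section Bijection

variable {X Z : Set α} {y : α} {R S : Set (α × α)}

lemma isLowerEnd_diff_upSet (hR : IsPor (X ∪ Z) R) : IsLowerEnd R (X \ upSet R Z) := by
  rintro a b hab ⟨-, hbU⟩
  have haU : a ∉ upSet R Z := fun ⟨z, hz, hza⟩ => hbU ⟨z, hz, hR.2.2.2 z a b hza hab⟩
  exact ⟨(hR.1 hab).1.resolve_right fun haZ => haU ⟨a, haZ, hR.2.1 a (Or.inr haZ)⟩, haU⟩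

lemma maxPts_tau_diff_upSet (hR : IsPor (X ∪ Z) R) (hQ : restrict R Z = diag Z) :
    maxPts (tau (X \ upSet R Z) ((X ∪ Z) \ (X \ upSet R Z)) R) \ (X \ upSet R Z) = Z := by
  set L := X \ upSet R Z
  have hZU : Z ⊆ upSet R Z := fun z hz => ⟨z, hz, hR.2.1 z (Or.inr hz)⟩
  have hU : (X ∪ Z) \ L ⊆ upSet R Z := by
    rintro x ⟨hx | hx, hxL⟩
    exacts [not_not.mp fun h => hxL ⟨hx, h⟩, hZU hx]
  have hTV := (hR.tau (L := L) (Set.sdiff_subset.trans Set.subset_union_left)).1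
  ext x
  constructor
  · rintro ⟨hmax, hxL⟩
    have hxV : x ∈ (X ∪ Z) \ L := ⟨(hTV (mem_maxPts_iff.mp hmax).1).1, hxL⟩
    obtain ⟨z, hz, hzx⟩ := hU hxV
    have hz' : z ∈ up (tau L ((X ∪ Z) \ L) R) x :=
      (up_tau_of_mem_diff hxV).symm ▸ ⟨hzx, Or.inr hz, fun hzL => hzL.2 (hZU hz)⟩
    rw [show up (tau L ((X ∪ Z) \ L) R) x = {x} from hmax, Set.mem_singleton_iff] at hz'
    exact hz' ▸ hz
  · intro hz
    have hzV : x ∈ (X ∪ Z) \ L := ⟨Or.inr hz, fun hzL => hzL.2 (hZU hz)⟩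
    refine ⟨?_, hzV.2⟩
    change up _ x = {x}
    rw [up_tau_of_mem_diff hzV]
    refine Set.eq_singleton_iff_unique_mem.mpr ⟨⟨hR.2.1 x hzV.1, hzV⟩, fun b ⟨hbx, hb⟩ => ?_⟩
    obtain ⟨z, hz', hzb⟩ := hU hb
    have hzx : (z, x) ∈ restrict R Z := ⟨hR.2.2.2 z b x hzb hbx, hz', hz⟩
    rw [hQ] at hzx
    obtain rfl : z = x := hzx.1
    exact hR.2.2.1 b z hbx hzb

def flipAdjoinTop (X Z : Set α) (y : α) (R : Set (α × α)) : Set (α × α) :=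
  adjoinTop (tau (X \ upSet R Z) ((X ∪ Z) \ (X \ upSet R Z)) R) (X \ upSet R Z) y

def flipRestrict (X Z : Set α) (y : α) (S : Set (α × α)) : Set (α × α) :=
  tau (down S y \ {y}) ((X ∪ Z) \ (down S y \ {y})) (restrict S (X ∪ Z))

lemma isPor_flipAdjoinTop (hR : IsPor (X ∪ Z) R) (hy : y ∉ X ∪ Z) :
    IsPor (X ∪ Z ∪ {y}) (flipAdjoinTop X Z y R) :=
  have hLV := Set.sdiff_subset.trans Set.subset_union_left
  (hR.tau hLV).adjoinTop isLowerEnd_tau hLV hy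

lemma maxPts_flipAdjoinTop (hR : IsPor (X ∪ Z) R) (hQ : restrict R Z = diag Z)
    (hy : y ∉ X ∪ Z) : maxPts (flipAdjoinTop X Z y R) = Z ∪ {y} := by
  rw [flipAdjoinTop, maxPts_adjoinTop (hR.tau (Set.sdiff_subset.trans Set.subset_union_left)).1 hy,
    maxPts_tau_diff_upSet hR hQ]

lemma isPor_flipRestrict (hS : IsPor (X ∪ Z ∪ {y}) S) : IsPor (X ∪ Z) (flipRestrict X Z y S) :=
  (hS.restrict Set.subset_union_left).tau (down_diff_subset hS.1)

lemma restrict_flipRestrict (hmax : maxPts S = Z ∪ {y}) :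
    restrict (flipRestrict X Z y S) Z = diag Z := by
  have hZmax : Z ⊆ maxPts S := hmax ▸ Set.subset_union_left
  rw [flipRestrict, restrict_tau_of_subset_diff (V := X ∪ Z)
      fun z hz => ⟨Or.inr hz, notMem_down_diff_of_mem_maxPts (hZmax hz)⟩,
    restrict_restrict_of_subset Set.subset_union_right, restrict_eq_diag_of_subset_maxPts hZmax,
    dual_diag]

lemma flipRestrict_flipAdjoinTop (hR : IsPor (X ∪ Z) R) (hy : y ∉ X ∪ Z) :
    flipRestrict X Z y (flipAdjoinTop X Z y R) = R := by
  have hTV := (hR.tau (L := X \ upSet R Z) (Set.sdiff_subset.trans Set.subset_union_left)).1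
  rw [flipRestrict, flipAdjoinTop, down_adjoinTop hTV hy,
    Set.insert_sdiff_self_of_notMem fun hyL => hy (Or.inl hyL.1), restrict_adjoinTop hTV hy,
    tau_tau hR.1 (isLowerEnd_diff_upSet hR)]

lemma diff_upSet_flipRestrict (hfin : (X ∪ Z ∪ {y}).Finite) (hS : IsPor (X ∪ Z ∪ {y}) S)
    (hmax : maxPts S = Z ∪ {y}) (hy : y ∉ X ∪ Z) :
    X \ upSet (flipRestrict X Z y S) Z = down S y \ {y} := by
  have hZL : ∀ z ∈ Z, z ∉ down S y \ {y} := fun z hz =>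
    notMem_down_diff_of_mem_maxPts (hmax ▸ Or.inl hz)
  ext x
  constructor
  · rintro ⟨hxX, hxU⟩
    by_contra hxL
    obtain ⟨m, hm, hxm⟩ := exists_mem_maxPts_of_mem hfin hS (Or.inl (Or.inl hxX))
    rw [hmax] at hm
    rcases hm with hmZ | rfl
    · exact hxU ⟨m, hmZ, mem_tau_iff.mpr (Or.inr (Or.inr ⟨⟨Or.inr hmZ, hZL m hmZ⟩,
        ⟨Or.inl hxX, hxL⟩, hxm, Or.inl hxX, Or.inr hmZ⟩))⟩
    · exact hxL ⟨hxm, fun hxy => hy (Or.inl (hxy ▸ hxX))⟩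
  · intro hxL
    have hxZ : x ∉ Z := fun hxZ => hZL x hxZ hxL
    exact ⟨(down_diff_subset hS.1 hxL).resolve_right hxZ,
      fun ⟨z, hz, hzx⟩ => hZL z hz (isLowerEnd_tau z x hzx hxL)⟩

lemma flipAdjoinTop_flipRestrict (hfin : (X ∪ Z ∪ {y}).Finite) (hS : IsPor (X ∪ Z ∪ {y}) S)
    (hmax : maxPts S = Z ∪ {y}) (hy : y ∉ X ∪ Z) :
    flipAdjoinTop X Z y (flipRestrict X Z y S) = S := by
  rw [flipAdjoinTop, diff_upSet_flipRestrict hfin hS hmax hy, flipRestrict,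
    tau_tau (hS.restrict Set.subset_union_left).1 (isLowerEnd_restrict_down_diff hS hy),
    adjoinTop_restrict_down hS.1 (hmax ▸ Or.inr rfl)]

end Bijection

theorem stmt1_general {α : Type*} (X Z : Set α) (hX : X.Finite) (hZ : Z.Finite)
    (y : α) (hy : y ∉ X ∪ Z) :
    {R : Set (α × α) | IsPor (X ∪ Z) R ∧ restrict R Z = diag Z}.ncard =
      {R : Set (α × α) | IsPor (X ∪ Z ∪ {y}) R ∧ maxPts R = Z ∪ {y}}.ncard := by
  have hfin : (X ∪ Z ∪ {y}).Finite := (hX.union hZ).union (Set.finite_singleton y)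
  refine Set.BijOn.ncard_eq (f := flipAdjoinTop X Z y)
    (Set.InvOn.bijOn (f' := flipRestrict X Z y) ⟨?_, ?_⟩ ?_ ?_)
  · rintro R ⟨hR, -⟩
    exact flipRestrict_flipAdjoinTop hR hy
  · rintro S ⟨hS, hmax⟩
    exact flipAdjoinTop_flipRestrict hfin hS hmax hy
  · rintro R ⟨hR, hQ⟩
    exact ⟨isPor_flipAdjoinTop hR hy, maxPts_flipAdjoinTop hR hQ hy⟩
  · rintro S ⟨hS, hmax⟩
    exact ⟨isPor_flipRestrict hS, restrict_flipRestrict hmax⟩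

/-- Erné's theorem. -/
theorem stmt1 {α : Type*} (X Z : Set α) (hX : X.Finite) (hZ : Z.Finite)
    (hXZ : Disjoint X Z) (y : α) (hy : y ∉ X ∪ Z) :
    {R : Set (α × α) | IsPor (X ∪ Z) R ∧ restrict R Z = diag Z}.ncard =
      {R : Set (α × α) | IsPor (X ∪ Z ∪ {y}) R ∧ maxPts R = Z ∪ {y}}.ncard :=
  stmt1_general X Z hX hZ y hy

end Erne
end

section
/- Let X, Y be finite disjoint sets and Q ∈ 𝔓(Y). With 𝔉*_Q(X,Y) = {f ∈ 𝔉_Q(X,Y) : X = ⋃_{y∈Y} f(y)}, the mapping Φ induces a bijection between 𝔉*_Q(X,Y) and 𝔐*_Q(X,Y); that is, for f ∈ 𝔉_Q(X,Y), Φ(f) ∈ 𝔐*_Q(X,Y) if and only if X = ⋃_{y∈Y} f(y). -/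
/-! `Φ(f)` orders `X` by `P`, `Y` by `Q`, and puts each `x ∈ f(y)` below `y`. `Y` is an upper end
of it, and `P` and `f` are read back from `R = Φ(f)` as `R|_X` and `y ↦ ↓_R y ∩ X`. This gives
injectivity; conversely every `R ∈ ℭ_Q(X,Y)` in which each point of `X` lies below a point of `Y`
is `Φ` of its read-back, convexity of `Y` ruling out pairs from `Y` down to `X`.

Since `X` is finite, among the points of `X` above a given one some `m` is maximal within `X`,
and `m` is maximal in `R` unless it lies in `Y` or below a point of `Y`. So `max R = max Q` says
exactly that each point of `X` lies below a point of `Y`, which for `R = Φ(f)` is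
`X = ⋃_y f(y)`. -/

namespace Erne

variable {α : Type*}

lemma mem_maxPts {R : Set (α × α)} {m : α} :
    m ∈ maxPts R ↔ (m, m) ∈ R ∧ ∀ z, (m, z) ∈ R → z = m := by
  simp only [maxPts, up, Set.ext_iff, Set.mem_ofPred_eq, Set.mem_singleton_iff]
  exact ⟨fun h => ⟨(h m).2 rfl, fun z => (h z).1⟩,
    fun h z => ⟨h.2 z, fun hz => hz ▸ h.1⟩⟩

lemma exists_mem_of_maxPts_subset {X Y : Set α} {R : Set (α × α)} (hR : IsPor (X ∪ Y) R)
    (hX : X.Finite) (hmax : maxPts R ⊆ Y) {x : α} (hx : x ∈ X) : ∃ y ∈ Y, (x, y) ∈ R := by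
  obtain ⟨hsub, hrefl, hanti, htrans⟩ := hR
  obtain ⟨m, ⟨hmX, hxm⟩, hmin⟩ :=
    (hX.subset (Set.sep_subset X fun z => (x, z) ∈ R)).exists_minimalFor (up R) _
      ⟨x, hx, hrefl x (Or.inl hx)⟩
  by_cases hmY : m ∈ Y
  · exact ⟨m, hmY, hxm⟩
  obtain ⟨z, hmz, hzm⟩ : ∃ z, (m, z) ∈ R ∧ z ≠ m := by
    by_contra! h
    exact hmY (hmax (mem_maxPts.2 ⟨hrefl m (Or.inl hmX), h⟩))
  rcases (hsub hmz).2 with hzX | hzY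
  · have hzm' : (z, m) ∈ R :=
      hmin ⟨hzX, htrans _ _ _ hxm hmz⟩ (fun w hw => htrans _ _ _ hmz hw) (hrefl m (Or.inl hmX))
    exact absurd (hanti _ _ hzm' hmz) hzm
  · exact ⟨z, hzY, htrans _ _ _ hxm hmz⟩

section Phi

variable {X Y : Set α} {Q P : Set (α × α)} {f : ↥Y → Set α}

lemma mem_Phi {a b : α} :
    (a, b) ∈ Phi Q Y P f ↔ (a, b) ∈ P ∨ (a, b) ∈ Q ∨ ∃ h : b ∈ Y, a ∈ f ⟨b, h⟩ := by
  simp only [Phi, Set.mem_union, Set.mem_ofPred_eq, or_assoc]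

lemma subset_of_mem_Fset (hF : (P, f) ∈ Fset Q X Y) (y : ↥Y) : f y ⊆ X :=
  fun _ hx => (hF.1.1 ((hF.2.1 y).1 hx)).1

lemma Phi_subset (hQ : Q ⊆ Y ×ˢ Y) (hF : (P, f) ∈ Fset Q X Y) :
    Phi Q Y P f ⊆ (X ∪ Y) ×ˢ (X ∪ Y) := by
  rintro ⟨a, b⟩ hab
  rcases mem_Phi.1 hab with h | h | ⟨hb, ha⟩
  · exact ⟨Or.inl (hF.1.1 h).1, Or.inl (hF.1.1 h).2⟩
  · exact ⟨Or.inr (hQ h).1, Or.inr (hQ h).2⟩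
  · exact ⟨Or.inl (subset_of_mem_Fset hF _ ha), Or.inr hb⟩

lemma mem_Phi_iff_of_snd_mem (hXY : Disjoint X Y) (hQ : Q ⊆ Y ×ˢ Y) {a b : α} (hb : b ∈ X) :
    (a, b) ∈ Phi Q Y P f ↔ (a, b) ∈ P := by
  have hbY : b ∉ Y := hXY.notMem_of_mem_left hb
  rw [mem_Phi]
  exact ⟨fun h => h.resolve_right (by rintro (h | ⟨h, -⟩); exacts [hbY (hQ h).2, hbY h]), Or.inl⟩

lemma mem_Phi_iff_of_fst_mem (hXY : Disjoint X Y) (hF : (P, f) ∈ Fset Q X Y) {a b : α}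
    (ha : a ∈ Y) : (a, b) ∈ Phi Q Y P f ↔ (a, b) ∈ Q := by
  have haX : a ∉ X := hXY.notMem_of_mem_right ha
  rw [mem_Phi]
  refine ⟨fun h => ?_, fun h => Or.inr (Or.inl h)⟩
  rcases h with h | h | ⟨hb, h⟩
  exacts [absurd (hF.1.1 h).1 haX, h, absurd (subset_of_mem_Fset hF _ h) haX]

lemma mem_Phi_iff_of_fst_mem_of_snd_mem (hXY : Disjoint X Y) (hQ : Q ⊆ Y ×ˢ Y)
    (hF : (P, f) ∈ Fset Q X Y) {a b : α} (ha : a ∈ X) (hb : b ∈ Y) :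
    (a, b) ∈ Phi Q Y P f ↔ a ∈ f ⟨b, hb⟩ := by
  rw [mem_Phi]
  refine ⟨fun h => ?_, fun h => Or.inr (Or.inr ⟨hb, h⟩)⟩
  rcases h with h | h | ⟨_, h⟩
  exacts [absurd (hF.1.1 h).2 (hXY.notMem_of_mem_right hb),
    absurd (hQ h).1 (hXY.notMem_of_mem_left ha), h]

lemma isUpperEnd_Phi (hXY : Disjoint X Y) (hQ : Q ⊆ Y ×ˢ Y) (hF : (P, f) ∈ Fset Q X Y) :
    IsUpperEnd (Phi Q Y P f) Y :=
  fun _ _ hab ha => (hQ ((mem_Phi_iff_of_fst_mem hXY hF ha).1 hab)).2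

lemma isPor_Phi (hXY : Disjoint X Y) (hQ : IsPor Y Q) (hF : (P, f) ∈ Fset Q X Y) :
    IsPor (X ∪ Y) (Phi Q Y P f) := by
  obtain ⟨hQsub, hQrefl, hQanti, hQtrans⟩ := hQ
  have hup := isUpperEnd_Phi hXY hQsub hF
  obtain ⟨⟨-, hPrefl, hPanti, hPtrans⟩, hlower, hmono⟩ := id hF
  refine ⟨Phi_subset hQsub hF, ?_, fun a b hab hba => ?_, fun a b c hab hbc => ?_⟩
  · rintro x (hx | hx)
    exacts [mem_Phi.2 (Or.inl (hPrefl x hx)), mem_Phi.2 (Or.inr (Or.inl (hQrefl x hx)))]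
  · rcases (Phi_subset hQsub hF hab).1 with haX | haY
    · rcases (Phi_subset hQsub hF hab).2 with hbX | hbY
      · exact hPanti a b ((mem_Phi_iff_of_snd_mem hXY hQsub hbX).1 hab)
          ((mem_Phi_iff_of_snd_mem hXY hQsub haX).1 hba)
      · exact absurd (hup b a hba hbY) (hXY.notMem_of_mem_left haX)
    · have hbY := hup a b hab haY
      exact hQanti a b ((mem_Phi_iff_of_fst_mem hXY hF haY).1 hab)
        ((mem_Phi_iff_of_fst_mem hXY hF hbY).1 hba)
  · rcases (Phi_subset hQsub hF hab).1 with haX | haY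
    · rcases (Phi_subset hQsub hF hab).2 with hbX | hbY
      · rw [mem_Phi_iff_of_snd_mem hXY hQsub hbX] at hab
        rcases (Phi_subset hQsub hF hbc).2 with hcX | hcY
        · rw [mem_Phi_iff_of_snd_mem hXY hQsub hcX] at hbc ⊢
          exact hPtrans a b c hab hbc
        · rw [mem_Phi_iff_of_fst_mem_of_snd_mem hXY hQsub hF hbX hcY] at hbc
          rw [mem_Phi_iff_of_fst_mem_of_snd_mem hXY hQsub hF haX hcY]
          exact (hlower _).2 a b hab hbc
      · have hcY := hup b c hbc hbY
        rw [mem_Phi_iff_of_fst_mem_of_snd_mem hXY hQsub hF haX hbY] at hab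
        rw [mem_Phi_iff_of_fst_mem hXY hF hbY] at hbc
        rw [mem_Phi_iff_of_fst_mem_of_snd_mem hXY hQsub hF haX hcY]
        exact hmono ⟨b, hbY⟩ ⟨c, hcY⟩ hbc hab
    · have hbY := hup a b hab haY
      rw [mem_Phi_iff_of_fst_mem hXY hF haY] at hab ⊢
      rw [mem_Phi_iff_of_fst_mem hXY hF hbY] at hbc
      exact hQtrans a b c hab hbc

lemma restrict_Phi_left (hXY : Disjoint X Y) (hQ : Q ⊆ Y ×ˢ Y) (hF : (P, f) ∈ Fset Q X Y) :
    restrict (Phi Q Y P f) X = P := by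
  ext ⟨a, b⟩
  refine ⟨fun ⟨hab, _, hb⟩ => (mem_Phi_iff_of_snd_mem hXY hQ hb).1 hab,
    fun hab => ⟨mem_Phi.2 (Or.inl hab), hF.1.1 hab⟩⟩

lemma restrict_Phi_right (hXY : Disjoint X Y) (hQ : Q ⊆ Y ×ˢ Y) (hF : (P, f) ∈ Fset Q X Y) :
    restrict (Phi Q Y P f) Y = Q := by
  ext ⟨a, b⟩
  refine ⟨fun ⟨hab, ha, _⟩ => (mem_Phi_iff_of_fst_mem hXY hF ha).1 hab,
    fun hab => ⟨mem_Phi.2 (Or.inr (Or.inl hab)), hQ hab⟩⟩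

lemma down_Phi_inter (hXY : Disjoint X Y) (hQ : Q ⊆ Y ×ˢ Y) (hF : (P, f) ∈ Fset Q X Y)
    (y : ↥Y) : down (Phi Q Y P f) y ∩ X = f y := by
  ext x
  refine ⟨fun ⟨hx, hxX⟩ => (mem_Phi_iff_of_fst_mem_of_snd_mem hXY hQ hF hxX y.2).1 hx,
    fun hx => ⟨mem_Phi.2 (Or.inr (Or.inr ⟨y.2, hx⟩)), subset_of_mem_Fset hF y hx⟩⟩

lemma Phi_mem_Mset (hXY : Disjoint X Y) (hQ : IsPor Y Q) (hF : (P, f) ∈ Fset Q X Y) :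
    Phi Q Y P f ∈ Mset Q X Y :=
  ⟨⟨isPor_Phi hXY hQ hF, isUpperEnd_Phi hXY hQ.1 hF⟩, isPor_Phi hXY hQ hF,
    restrict_Phi_right hXY hQ.1 hF, fun _ _ _ ha _ hax _ => isUpperEnd_Phi hXY hQ.1 hF _ _ hax ha⟩

lemma maxPts_eq_maxPts_Phi (hXY : Disjoint X Y) (hQ : Q ⊆ Y ×ˢ Y) (hF : (P, f) ∈ Fset Q X Y)
    (hU : X = ⋃ y : ↥Y, f y) : maxPts Q = maxPts (Phi Q Y P f) := by
  have hmaxY : maxPts (Phi Q Y P f) ⊆ Y := by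
    intro m hm
    obtain ⟨hmm, hall⟩ := mem_maxPts.1 hm
    refine (Phi_subset hQ hF hmm).1.resolve_left fun hmX => ?_
    obtain ⟨y, hy⟩ := Set.mem_iUnion.1 (hU ▸ hmX)
    exact hXY.notMem_of_mem_left hmX
      (hall y (mem_Phi.2 (Or.inr (Or.inr ⟨y.2, hy⟩))) ▸ y.2)
  ext m
  refine ⟨fun hm => ?_, fun hm => ?_⟩
  · have hmY := (hQ (mem_maxPts.1 hm).1).1
    simpa only [mem_maxPts, mem_Phi_iff_of_fst_mem hXY hF hmY] using hm
  · have hmY := hmaxY hm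
    simpa only [mem_maxPts, mem_Phi_iff_of_fst_mem hXY hF hmY] using hm

lemma iUnion_eq_of_maxPts_eq_maxPts_Phi (hX : X.Finite) (hXY : Disjoint X Y) (hQ : IsPor Y Q)
    (hF : (P, f) ∈ Fset Q X Y) (hmax : maxPts Q = maxPts (Phi Q Y P f)) :
    X = ⋃ y : ↥Y, f y := by
  refine (Set.iUnion_subset (subset_of_mem_Fset hF)).antisymm' fun x hx => ?_
  obtain ⟨y, hy, hxy⟩ := exists_mem_of_maxPts_subset (isPor_Phi hXY hQ hF) hX
    (hmax ▸ fun m hm => (hQ.1 (mem_maxPts.1 hm).1).1) hx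
  exact Set.mem_iUnion.2 ⟨⟨y, hy⟩, (mem_Phi_iff_of_fst_mem_of_snd_mem hXY hQ.1 hF hx hy).1 hxy⟩

lemma Phi_mem_MstarSet_iff (hX : X.Finite) (hXY : Disjoint X Y) (hQ : IsPor Y Q)
    (hF : (P, f) ∈ Fset Q X Y) : Phi Q Y P f ∈ MstarSet Q X Y ↔ X = ⋃ y : ↥Y, f y :=
  ⟨fun h => iUnion_eq_of_maxPts_eq_maxPts_Phi hX hXY hQ hF h.2,
    fun hU => ⟨(Phi_mem_Mset hXY hQ hF).2, maxPts_eq_maxPts_Phi hXY hQ.1 hF hU⟩⟩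

lemma injOn_Phi (hXY : Disjoint X Y) (hQ : Q ⊆ Y ×ˢ Y) :
    Set.InjOn (fun pf : Set (α × α) × (↥Y → Set α) => Phi Q Y pf.1 pf.2) (Fset Q X Y) := by
  rintro ⟨P₁, f₁⟩ h₁ ⟨P₂, f₂⟩ h₂ (heq : Phi Q Y P₁ f₁ = Phi Q Y P₂ f₂)
  refine Prod.ext ?_ (funext fun y => ?_)
  · rw [← restrict_Phi_left hXY hQ h₁, ← restrict_Phi_left hXY hQ h₂, heq]
  · dsimp only
    rw [← down_Phi_inter hXY hQ h₁, ← down_Phi_inter hXY hQ h₂, heq]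

end Phi

section Decomposition

variable {X Y : Set α} {Q R : Set (α × α)}

lemma mem_Fset_restrict_down (hR : IsPor (X ∪ Y) R) (hQR : Q ⊆ R) :
    (restrict R X, fun y : ↥Y => down R y ∩ X) ∈ Fset Q X Y := by
  obtain ⟨-, hrefl, hanti, htrans⟩ := hR
  refine ⟨⟨Set.inter_subset_right, fun x hx => ⟨hrefl x (Or.inl hx), hx, hx⟩,
    fun a b hab hba => hanti a b hab.1 hba.1,
    fun a b c hab hbc => ⟨htrans a b c hab.1 hbc.1, hab.2.1, hbc.2.2⟩⟩, fun y => ?_, ?_⟩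
  · exact ⟨fun x hx => ⟨hrefl x (Or.inl hx.2), hx.2, hx.2⟩,
      fun a b hab hb => ⟨htrans a b y hab.1 hb.1, hab.2.1⟩⟩
  · exact fun a b hab x hx => ⟨htrans x a b hx.1 (hQR hab), hx.2⟩

lemma Phi_restrict_down (hXY : Disjoint X Y) (hR : R ∈ Cset Q X Y)
    (hbelow : ∀ x ∈ X, ∃ y ∈ Y, (x, y) ∈ R) :
    Phi Q Y (restrict R X) (fun y : ↥Y => down R y ∩ X) = R := by
  obtain ⟨⟨hsub, -⟩, hres, hconv⟩ := hR
  ext ⟨a, b⟩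
  rw [mem_Phi, ← hres]
  refine ⟨by rintro (h | h | ⟨_, h⟩) <;> exact h.1, fun hab => ?_⟩
  rcases (hsub hab).2 with hbX | hbY
  · refine Or.inl ⟨hab, (hsub hab).1.resolve_right fun haY => ?_, hbX⟩
    obtain ⟨y, hy, hby⟩ := hbelow b hbX
    exact hXY.notMem_of_mem_left hbX (hconv a y b haY hy hab hby)
  · rcases (hsub hab).1 with haX | haY
    exacts [Or.inr (Or.inr ⟨hbY, hab, haX⟩), Or.inr (Or.inl ⟨hab, haY, hbY⟩)]

lemma exists_Phi_eq_of_mem_MstarSet (hX : X.Finite) (hXY : Disjoint X Y) (hQ : Q ⊆ Y ×ˢ Y)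
    (hR : R ∈ MstarSet Q X Y) : ∃ pf ∈ FstarSet Q X Y, Phi Q Y pf.1 pf.2 = R := by
  obtain ⟨hC, hmax⟩ := hR
  have hbelow : ∀ x ∈ X, ∃ y ∈ Y, (x, y) ∈ R := fun x hx =>
    exists_mem_of_maxPts_subset hC.1 hX (hmax ▸ fun m hm => (hQ (mem_maxPts.1 hm).1).1) hx
  have hU : X = ⋃ y : ↥Y, down R y ∩ X := by
    refine (Set.iUnion_subset fun _ => Set.inter_subset_right).antisymm' fun x hx => ?_
    obtain ⟨y, hy, hxy⟩ := hbelow x hx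
    exact Set.mem_iUnion.2 ⟨⟨y, hy⟩, hxy, hx⟩
  exact ⟨_, ⟨mem_Fset_restrict_down hC.1 (hC.2.1 ▸ Set.inter_subset_left), hU⟩,
    Phi_restrict_down hXY hC hbelow⟩

end Decomposition

theorem stmt7_general {α : Type*} (X Y : Set α) (hX : X.Finite)
    (hXY : Disjoint X Y) (Q : Set (α × α)) (hQ : IsPor Y Q) :
    Set.BijOn (fun pf : Set (α × α) × (↥Y → Set α) => Phi Q Y pf.1 pf.2)
      (FstarSet Q X Y) (MstarSet Q X Y) ∧
    ∀ pf ∈ Fset Q X Y,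
      (Phi Q Y pf.1 pf.2 ∈ MstarSet Q X Y ↔ X = ⋃ y : ↥Y, pf.2 y) := by
  have hiff : ∀ pf ∈ Fset Q X Y, (Phi Q Y pf.1 pf.2 ∈ MstarSet Q X Y ↔ X = ⋃ y : ↥Y, pf.2 y) :=
    fun _ hpf => Phi_mem_MstarSet_iff hX hXY hQ hpf
  exact ⟨⟨fun pf hpf => (hiff pf hpf.1).2 hpf.2, (injOn_Phi hXY hQ.1).mono fun _ h => h.1,
    fun _ hR => exists_Phi_eq_of_mem_MstarSet hX hXY hQ.1 hR⟩, hiff⟩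

/-- `Φ` induces a bijection between `𝔉*_Q(X,Y)` and `𝔐*_Q(X,Y)`;
for `f ∈ 𝔉_Q(X,Y)`, `Φ(f) ∈ 𝔐*_Q(X,Y)` iff `X = ⋃_{y ∈ Y} f(y)`. -/
theorem stmt7 {α : Type*} (X Y : Set α) (hX : X.Finite) (hY : Y.Finite)
    (hXY : Disjoint X Y) (Q : Set (α × α)) (hQ : IsPor Y Q) :
    Set.BijOn (fun pf : Set (α × α) × (↥Y → Set α) => Phi Q Y pf.1 pf.2)
      (FstarSet Q X Y) (MstarSet Q X Y) ∧
    ∀ pf ∈ Fset Q X Y,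
      (Phi Q Y pf.1 pf.2 ∈ MstarSet Q X Y ↔ X = ⋃ y : ↥Y, pf.2 y) :=
  stmt7_general X Y hX hXY Q hQ

end Erne
end

section
/- Let X, Y be finite disjoint sets. The mapping τ_{X,Y} : 𝔘(X,Y) → 𝔘(X,Y) defined by τ_{X,Y}(R) = (R|_X)^d ∪ ((X×Y)\R) ∪ (R|_Y)^d is well defined (i.e., τ_{X,Y}(R) is a partial order relation on X∪Y in which Y is an upper end) and is a self-inverse bijection: τ_{X,Y}(τ_{X,Y}(R)) = R for all R ∈ 𝔘(X,Y). -/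
namespace Erne

variable {α : Type*}

/-! On `X` and on `Y` the map `τ` dualizes `R`, and between `X` and `Y` it complements `R`;
since `Y` is an upper end, no pair leads from `Y` back to `X`, so nothing is lost and applying `τ`
twice restores `R`. Transitivity of `τ(R)` in the mixed cases is transitivity of `R` read
contrapositively. -/

lemma mem_tau {X Y : Set α} {R : Set (α × α)} {a b : α} :
    (a, b) ∈ tau X Y R ↔
      (a ∈ X ∧ b ∈ X ∧ (b, a) ∈ R) ∨ (a ∈ X ∧ b ∈ Y ∧ (a, b) ∉ R) ∨
        (a ∈ Y ∧ b ∈ Y ∧ (b, a) ∈ R) := by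
  simp only [tau, dual, restrict, Set.mem_union, Set.mem_ofPred_eq, Set.mem_inter_iff,
    Set.mem_prod, Set.mem_sdiff]
  tauto

section

variable {X Y : Set α} {R : Set (α × α)}

lemma tau_subset_prod : tau X Y R ⊆ (X ∪ Y) ×ˢ (X ∪ Y) := by
  rintro ⟨a, b⟩ h
  simp only [mem_tau] at h
  simp only [Set.mem_prod, Set.mem_union]
  tauto

lemma tau_refl (hrefl : ∀ x ∈ X ∪ Y, (x, x) ∈ R) : ∀ x ∈ X ∪ Y, (x, x) ∈ tau X Y R := by
  rintro x (hx | hx) <;> simp [mem_tau, hx, hrefl x (by simp [hx])]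

lemma tau_antisymm (hXY : Disjoint X Y) (hanti : ∀ x y, (x, y) ∈ R → (y, x) ∈ R → x = y) :
    ∀ x y, (x, y) ∈ tau X Y R → (y, x) ∈ tau X Y R → x = y := by
  have hd := Set.disjoint_left.mp hXY
  intro x y h₁ h₂
  simp only [mem_tau] at h₁ h₂
  grind

lemma tau_trans (hXY : Disjoint X Y)
    (htrans : ∀ x y z, (x, y) ∈ R → (y, z) ∈ R → (x, z) ∈ R) :
    ∀ x y z, (x, y) ∈ tau X Y R → (y, z) ∈ tau X Y R → (x, z) ∈ tau X Y R := by
  have hd := Set.disjoint_left.mp hXY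
  intro x y z h₁ h₂
  rw [mem_tau] at h₁ h₂ ⊢
  rcases h₁ with ⟨hx, hy, hyx⟩ | ⟨hx, hy, hxy⟩ | ⟨hx, hy, hyx⟩ <;>
    rcases h₂ with ⟨hy', hz, hzy⟩ | ⟨hy', hz, hyz⟩ | ⟨hy', hz, hzy⟩ <;>
    first
    | exact (hd hy hy').elim
    | exact (hd hy' hy).elim
    | skip
  · exact Or.inl ⟨hx, hz, htrans z y x hzy hyx⟩
  · exact Or.inr (Or.inl ⟨hx, hz, fun hxz => hyz (htrans y x z hyx hxz)⟩)
  · exact Or.inr (Or.inl ⟨hx, hz, fun hxz => hxy (htrans x z y hxz hzy)⟩)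
  · exact Or.inr (Or.inr ⟨hx, hz, htrans z y x hzy hyx⟩)

lemma isUpperEnd_tau (hXY : Disjoint X Y) : IsUpperEnd (tau X Y R) Y := by
  have hd := Set.disjoint_left.mp hXY
  intro x y h hx
  simp only [mem_tau] at h
  grind

lemma tau_mem_Uset (hXY : Disjoint X Y) (hR : R ∈ Uset X Y) : tau X Y R ∈ Uset X Y := by
  obtain ⟨⟨-, hrefl, hanti, htrans⟩, -⟩ := hR
  exact ⟨⟨tau_subset_prod, tau_refl hrefl, tau_antisymm hXY hanti, tau_trans hXY htrans⟩,
    isUpperEnd_tau hXY⟩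

lemma tau_tau_s9 (hXY : Disjoint X Y) (hsub : R ⊆ (X ∪ Y) ×ˢ (X ∪ Y)) (hup : IsUpperEnd R Y) :
    tau X Y (tau X Y R) = R := by
  have hd := Set.disjoint_left.mp hXY
  ext ⟨a, b⟩
  have hab := @hsub (a, b)
  have := hup a b
  simp only [mem_tau, Set.mem_prod, Set.mem_union] at hab ⊢
  grind

end

theorem stmt9_general {α : Type*} (X Y : Set α)
    (hXY : Disjoint X Y) :
    (∀ R ∈ Uset X Y, tau X Y R ∈ Uset X Y) ∧
    (∀ R ∈ Uset X Y, tau X Y (tau X Y R) = R) ∧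
    Set.BijOn (tau X Y) (Uset X Y) (Uset X Y) := by
  have hmaps : Set.MapsTo (tau X Y) (Uset X Y) (Uset X Y) := fun _ hR => tau_mem_Uset hXY hR
  have hinv : ∀ R ∈ Uset X Y, tau X Y (tau X Y R) = R := fun _ hR => tau_tau_s9 hXY hR.1.1 hR.2
  exact ⟨hmaps, hinv, Set.InvOn.bijOn ⟨hinv, hinv⟩ hmaps hmaps⟩

/-- `τ_{X,Y}` is a well-defined self-inverse bijection of `𝔘(X,Y)`. -/
theorem stmt9 {α : Type*} (X Y : Set α) (hX : X.Finite) (hY : Y.Finite)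
    (hXY : Disjoint X Y) :
    (∀ R ∈ Uset X Y, tau X Y R ∈ Uset X Y) ∧
    (∀ R ∈ Uset X Y, tau X Y (tau X Y R) = R) ∧
    Set.BijOn (tau X Y) (Uset X Y) (Uset X Y) :=
  stmt9_general X Y hXY

end Erne
end
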